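/- arXiv:2307.00160 — 4 statements merged into one kernel-verified Lean document; each statement's English description precedes it below -/
import Mathlib

section
/- For every formal power series f ∈ ℚ[[t]] with zero constant term, ℒ(ℰ(f)) = f. -/
open PowerSeries

/-- Substitution of `t^m` for `t` in a formal power series: `(substPow m f) = f(t^m)`.
(For `m ≥ 1`, the coefficient of `t^n` in `f(t^m)` is the coefficient of `t^{n/m}` in `f`
when `m ∣ n`, and `0` otherwise.) -/
noncomputable def substPow (m : ℕ) (f : PowerSeries ℚ) : PowerSeries ℚ :=
  PowerSeries.mk fun n => if m ∣ n then PowerSeries.coeff (n / m) f else 0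

/-- The coefficientwise sum `∑_{m=1}^∞ g m` of a family of power series in which the
`m`-th member has order `≥ m`: its `n`-th coefficient is `∑_{m=1}^{n}` of the `n`-th
coefficients (higher terms contribute nothing since `g m` has order `≥ m`). -/
noncomputable def seriesSum (g : ℕ → PowerSeries ℚ) : PowerSeries ℚ :=
  PowerSeries.mk fun n => ∑ m ∈ Finset.Icc 1 n, PowerSeries.coeff n (g m)

/-- Formal exponential `exp(h) = ∑_{k≥0} h^k / k!` of a power series `h` with zero
constant term (so that `h^k` has order `≥ k` and the sum converges coefficientwise). -/
noncomputable def expS (h : PowerSeries ℚ) : PowerSeries ℚ :=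
  PowerSeries.mk fun n =>
    ∑ k ∈ Finset.range (n + 1), (Nat.factorial k : ℚ)⁻¹ * PowerSeries.coeff n (h ^ k)

/-- Formal logarithm `log(1 + h) = ∑_{k≥1} (−1)^{k+1} h^k / k` for a power series `h`
with zero constant term. -/
noncomputable def logS (h : PowerSeries ℚ) : PowerSeries ℚ :=
  PowerSeries.mk fun n =>
    ∑ k ∈ Finset.Icc 1 n, ((-1 : ℚ) ^ (k + 1) / k) * PowerSeries.coeff n (h ^ k)

/-- The operator `ℰ(f) = exp(∑_{m=1}^∞ (1/m)·f(t^m))`. -/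
noncomputable def calE (f : PowerSeries ℚ) : PowerSeries ℚ :=
  expS (seriesSum fun m => (m : ℚ)⁻¹ • substPow m f)

/-- The operator `ℒ(g) = ∑_{n=1}^∞ (μ(n)/n)·log g(t^n)`. -/
noncomputable def calL (g : PowerSeries ℚ) : PowerSeries ℚ :=
  seriesSum fun n =>
    ((ArithmeticFunction.moebius n : ℚ) / n) • logS (substPow n g - 1)

/-!
Write `ℰ(f) = exp H` with `H = ∑ₘ f(t^m)/m`. Substituting `t^n` commutes with `exp`, and
`log(1 + X)` evaluated at `exp X - 1` is `X`, since both have derivative `1`; hence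
`log ℰ(f)(t^n) = H(t^n)`, and the `N`-th coefficient of `ℒ(ℰ(f))` is
`∑_{n ∣ N} μ(n)/n · H_{N/n}` with `H_r = ∑_{m ∣ r} f_{r/m}/m`. Multiplied by `N`, this is Möbius
inversion of `r · H_r = ∑_{d ∣ r} d · f_d`.
-/

namespace PowerSeries

theorem mk_neg_one_pow_mul_one_add_X (A : Type*) [CommRing A] :
    (mk fun n => (-1 : A) ^ n) * (1 + X) = 1 := by
  simpa [rescale_mk, sub_eq_add_neg] using
    congrArg (rescale (-1 : A)) (mk_one_mul_one_sub_eq_one (S := A))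

theorem log_subst_exp_sub_one {A : Type*} [CommRing A] [Algebra ℚ A] :
    (log A).subst (exp A - 1) = X := by
  have := IsAddTorsionFree.of_module_rat (M := A)
  refine derivative.ext ?_ ?_
  · have hgeom := congrArg (substAlgHom (HasSubst.exp_sub_one (A := A)))
      (mk_neg_one_pow_mul_one_add_X A)
    rw [map_mul, map_one, map_add, map_one, substAlgHom_X, add_sub_cancel, coe_substAlgHom]
      at hgeom
    have hderiv_log : d⁄dX A (log A) = mk fun n => (-1 : A) ^ n := by simp [deriv_log]
    rw [derivative_subst HasSubst.exp_sub_one, hderiv_log, map_sub, derivative_exp,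
      Derivation.map_one_eq_zero, sub_zero, hgeom, derivative_X]
  · rw [constantCoeff_X]
    exact constantCoeff_subst_eq_zero (by simp [← constantCoeff_eq, constantCoeff_exp]) _
      constantCoeff_log

theorem coeff_subst_eq_sum_range {R S : Type*} [CommRing R] [CommRing S] [Algebra R S]
    (f : R⟦X⟧) {h : S⟦X⟧} (hh : constantCoeff h = 0) (n : ℕ) :
    coeff n (f.subst h) = ∑ k ∈ Finset.range (n + 1), coeff k f • coeff n (h ^ k) := by
  rw [coeff_subst' (HasSubst.of_constantCoeff_zero' hh)]
  refine finsum_eq_sum_of_support_subset _ fun k hk => ?_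
  rw [Finset.coe_range, Set.mem_Iio, Nat.lt_succ_iff]
  by_contra! hnk
  have hpow : coeff n (h ^ k) = 0 :=
    X_pow_dvd_iff.mp (pow_dvd_pow_of_dvd (X_dvd_iff.mpr hh) k) n hnk
  exact hk (by simp only [hpow, smul_zero])

end PowerSeries

theorem expS_eq_subst {h : ℚ⟦X⟧} (hh : constantCoeff h = 0) : expS h = (exp ℚ).subst h := by
  ext n
  simp [expS, coeff_subst_eq_sum_range _ hh]

theorem logS_eq_subst {h : ℚ⟦X⟧} (hh : constantCoeff h = 0) : logS h = (log ℚ).subst h := by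
  ext n
  rw [logS, coeff_mk, coeff_subst_eq_sum_range _ hh,
    Finset.sum_range_eq_add_Ico _ (Nat.add_one_pos n), Finset.Ico_add_one_right_eq_Icc]
  rw [coeff_zero_eq_constantCoeff, constantCoeff_log, zero_smul, zero_add]
  refine Finset.sum_congr rfl fun k hk => ?_
  rw [coeff_log, if_neg (Nat.one_le_iff_ne_zero.mp (Finset.mem_Icc.mp hk).1), smul_eq_mul, Algebra.algebraMap_self,
    RingHom.id_apply]

theorem substPow_eq_expand {m : ℕ} (hm : m ≠ 0) (f : ℚ⟦X⟧) : substPow m f = expand m hm f := by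
  ext n
  rw [substPow, coeff_mk, coeff_expand]

theorem substPow_expS {m : ℕ} (hm : m ≠ 0) {h : ℚ⟦X⟧} (hh : constantCoeff h = 0) :
    substPow m (expS h) = expS (substPow m h) := by
  rw [substPow_eq_expand hm, substPow_eq_expand hm, expS_eq_subst hh,
    expS_eq_subst (by rwa [constantCoeff_expand]), expand_apply, expand_apply,
    subst_comp_subst_apply (HasSubst.of_constantCoeff_zero' hh) (HasSubst.X_pow hm)]

theorem logS_expS_sub_one {h : ℚ⟦X⟧} (hh : constantCoeff h = 0) : logS (expS h - 1) = h := by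
  have hsub := HasSubst.of_constantCoeff_zero' hh
  have hexp : expS h - 1 = (exp ℚ - 1).subst h := by
    rw [expS_eq_subst hh, ← coe_substAlgHom hsub, map_sub, map_one]
  have hexp0 : constantCoeff (expS h - 1) = 0 := by
    rw [map_sub, map_one, sub_eq_zero, ← coeff_zero_eq_constantCoeff_apply]
    simp [expS]
  rw [logS_eq_subst hexp0, hexp, ← subst_comp_subst_apply HasSubst.exp_sub_one hsub,
    log_subst_exp_sub_one, subst_X hsub]

theorem constantCoeff_seriesSum (g : ℕ → ℚ⟦X⟧) : constantCoeff (seriesSum g) = 0 := by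
  rw [← coeff_zero_eq_constantCoeff_apply, seriesSum, coeff_mk,
    Finset.Icc_eq_empty_of_lt zero_lt_one, Finset.sum_empty]

theorem coeff_seriesSum_smul_substPow (c : ℕ → ℚ) (g : ℚ⟦X⟧) (n : ℕ) :
    coeff n (seriesSum fun m => c m • substPow m g) =
      ∑ m ∈ n.divisors, c m * coeff (n / m) g := by
  simp only [seriesSum, substPow, coeff_mk, coeff_smul, smul_eq_mul, mul_ite, mul_zero]
  rw [← Finset.sum_filter, Nat.divisors, Finset.Ico_add_one_right_eq_Icc]

open ArithmeticFunction Moebius in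
theorem sum_divisors_moebius_div_mul_eq {K : Type*} [Field K] [CharZero K] {a b : ℕ → K}
    (hb : ∀ r, 0 < r → b r = ∑ m ∈ r.divisors, (m : K)⁻¹ * a (r / m)) {N : ℕ} (hN : 0 < N) :
    ∑ n ∈ N.divisors, (μ n : K) / n * b (N / n) = a N := by
  have hsum : ∀ r > 0, ∑ d ∈ r.divisors, ((d : ℕ) : K) * a d = r * b r := by
    intro r hr
    rw [hb r hr, Finset.mul_sum, ← Nat.sum_div_divisors]
    refine Finset.sum_congr rfl fun m hm => ?_
    have hm0 : (m : K) ≠ 0 := Nat.cast_ne_zero.mpr (Nat.ne_of_gt (Nat.pos_of_mem_divisors hm))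
    rw [Nat.cast_div (Nat.dvd_of_mem_divisors hm) hm0]
    ring
  have hinv := sum_eq_iff_sum_mul_moebius_eq.mp hsum N hN
  have hN0 : (N : K) ≠ 0 := Nat.cast_ne_zero.mpr hN.ne'
  calc ∑ n ∈ N.divisors, (μ n : K) / n * b (N / n)
      = ∑ x ∈ N.divisorsAntidiagonal, (μ x.1 : K) / x.1 * b x.2 :=
        (Nat.sum_divisorsAntidiagonal fun i j => (μ i : K) / i * b j).symm
    _ = (∑ x ∈ N.divisorsAntidiagonal, (μ x.1 : K) * (x.2 * b x.2)) / N := by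
        rw [Finset.sum_div]
        refine Finset.sum_congr rfl fun x hx => ?_
        have hx1 : (x.1 : K) ≠ 0 :=
          Nat.cast_ne_zero.mpr (Nat.left_ne_zero_of_mem_divisorsAntidiagonal hx)
        have hx2 : (x.2 : K) ≠ 0 :=
          Nat.cast_ne_zero.mpr (Nat.right_ne_zero_of_mem_divisorsAntidiagonal hx)
        rw [← (Nat.mem_divisorsAntidiagonal.mp hx).1]
        push_cast
        field_simp
    _ = a N := by rw [hinv]; field_simp

/-- For every formal power series `f ∈ ℚ[[t]]` with zero constant term, `ℒ(ℰ(f)) = f`. -/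
theorem calL_calE (f : PowerSeries ℚ) (hf : PowerSeries.constantCoeff f = 0) :
    calL (calE f) = f := by
  set H := seriesSum fun m => (m : ℚ)⁻¹ • substPow m f with hH
  have hH0 : constantCoeff H = 0 := constantCoeff_seriesSum _
  have hL : calL (calE f) =
      seriesSum fun n => ((ArithmeticFunction.moebius n : ℚ) / n) • substPow n H := by
    rw [calL]
    congr 1
    funext n
    rcases eq_or_ne n 0 with rfl | hn
    · simp
    · rw [calE, ← hH, substPow_expS hn hH0,
        logS_expS_sub_one (by rw [substPow_eq_expand hn, constantCoeff_expand, hH0])]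
  ext N
  rw [hL, coeff_seriesSum_smul_substPow]
  rcases N.eq_zero_or_pos with rfl | hN
  · simp [hf]
  · exact sum_divisors_moebius_div_mul_eq (a := fun r => coeff r f) (b := fun r => coeff r H)
      (fun r _ => coeff_seriesSum_smul_substPow (fun m => (m : ℚ)⁻¹) f r) hN
end

section
/- Let r ≥ 1, 0 ≤ k ≤ r, and s₁, …, s_r be positive integers. In the ring of multivariate formal power series ℚ[[t₁, …, t_r]], set H = ∑_{n=1}^∞ (μ(n)/n)·∑_{m=1}^∞ (1/m)·(∑_{i=1}^k s_i t_i^n − ∑_{j=k+1}^r s_j(−t_j)^n)^m (which converges coefficientwise, and equals −∑_{n=1}^∞ (μ(n)/n)·log(1 − ∑_{i=1}^k s_i t_i^n + ∑_{j=k+1}^r s_j(−t_j)^n)). Then for every nonzero multi-index α = (α₁, …, α_r) ∈ ℕ₀^r, the coefficient of t₁^{α₁}⋯t_r^{α_r} in H equals ((−1)^{|α|_−}/|α|)·∑_{n ∣ α} μ(n)·((|α|/n)!·(−1)^{|α|_−/n} / ((α₁/n)!⋯(α_r/n)!))·s₁^{α₁/n}⋯s_r^{α_r/n}, where |α| = α₁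 + ⋯ + α_r, |α|_− = α_{k+1} + ⋯ + α_r, and n ∣ α means n divides every component α_i. -/
/-!
Write `P_n = ∑ᵢ cᵢ tᵢⁿ`, where `cᵢ = sᵢ` for `i < k` and `cᵢ = (-1)ⁿ⁺¹ sᵢ` otherwise. By the
multinomial theorem the coefficient of `t^α` in `P_nᵐ` vanishes unless `n ∣ α` and `|α| = n m`,
in which case it is `(|α|/n)! / ∏ (αᵢ/n)! · ∏ cᵢ^(αᵢ/n)`. Hence in the double sum defining `H`
only the pairs `(n, |α|/n)` with `n ∣ α` survive, the weight `μ(n)/n · 1/m` becomes `μ(n)/|α|`,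
and the sign `(-1)^((n+1)·|α|₋/n)` equals `(-1)^|α|₋ · (-1)^(|α|₋/n)`.
-/

/-- The series `P_n = ∑_{i=1}^k s_i t_i^n − ∑_{j=k+1}^r s_j (−t_j)^n` in
`ℚ[[t₁, …, t_r]]` (indices `0, …, k−1` are the "even" ones, `k, …, r−1` the "odd" ones). -/
noncomputable def baseSeries (r k n : ℕ) (s : Fin r → ℕ) : MvPowerSeries (Fin r) ℚ :=
  ∑ i : Fin r,
    if (i : ℕ) < k then (s i : ℚ) • (MvPowerSeries.X i) ^ n
    else - ((s i : ℚ) • (- MvPowerSeries.X i) ^ n)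

/-- `H = ∑_{n=1}^∞ (μ(n)/n)·∑_{m=1}^∞ (1/m)·(P_n)^m`, defined coefficientwise: since
`(P_n)^m` has order `≥ max n m`, only the terms with `n, m ≤ |α|` contribute to the
coefficient of the monomial `α`. -/
noncomputable def Hmv (r k : ℕ) (s : Fin r → ℕ) : MvPowerSeries (Fin r) ℚ :=
  fun α =>
    ∑ n ∈ Finset.Icc 1 (∑ i, α i), ∑ m ∈ Finset.Icc 1 (∑ i, α i),
      ((ArithmeticFunction.moebius n : ℚ) / n) * (m : ℚ)⁻¹ *
        MvPowerSeries.coeff (R := ℚ) α ((baseSeries r k n s) ^ m)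


open Finset
open scoped Nat

namespace MvPowerSeries

variable {σ R : Type*} [CommSemiring R]

theorem C_mul_X_pow_eq_monomial (i : σ) (c : R) (n : ℕ) :
    C c * X i ^ n = monomial (Finsupp.single i n) c := by
  rw [X_pow_eq, ← monomial_zero_eq_C_apply, monomial_mul_monomial, zero_add, mul_one]

variable [Fintype σ] [DecidableEq σ]

theorem coeff_sum_C_mul_X_pow_pow (c : σ → R) {n : ℕ} (hn : 0 < n) (m : ℕ) (α : σ →₀ ℕ) :
    coeff α ((∑ i, C (c i) * X i ^ n) ^ m) =
      if (∀ i, n ∣ α i) ∧ ∑ i, α i = n * m then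
        Nat.multinomial univ (fun i => α i / n) * ∏ i, c i ^ (α i / n)
      else 0 := by
  have hterm (β : σ → ℕ) :
      coeff α ((Nat.multinomial univ β : MvPowerSeries σ R) * ∏ i, (C (c i) * X i ^ n) ^ β i) =
        if ∀ i, α i = n * β i then Nat.multinomial univ β * ∏ i, c i ^ β i else 0 := by
    simp_rw [← nsmul_eq_mul, map_nsmul, C_mul_X_pow_eq_monomial, monomial_pow, prod_monomial,
      coeff_monomial, Finsupp.ext_iff]
    simp [Finsupp.single_apply, mul_comm]
  simp_rw [sum_pow_eq_sum_piAntidiag, map_sum, hterm]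
  by_cases hdvd : ∀ i, n ∣ α i
  · have hα (β : σ → ℕ) : (∀ i, α i = n * β i) ↔ (fun i => α i / n) = β := by
      simp only [funext_iff, Nat.div_eq_iff_eq_mul_left hn (hdvd _), mul_comm n]
    have hsum : ∑ i, α i / n = m ↔ ∑ i, α i = n * m := by
      rw [← Nat.sum_div fun i _ => hdvd i,
        Nat.div_eq_iff_eq_mul_left hn (dvd_sum fun i _ => hdvd i), mul_comm]
    simp_rw [hα, sum_ite_eq, mem_piAntidiag, hsum]
    simp [hdvd]
  · rw [if_neg (hdvd ∘ And.left)]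
    exact sum_eq_zero fun β _ => if_neg fun h => hdvd fun i => ⟨β i, h i⟩

end MvPowerSeries

theorem Nat.cast_multinomial {α K : Type*} [Semifield K] [CharZero K] (s : Finset α)
    (f : α → ℕ) :
    (Nat.multinomial s f : K) = (∑ i ∈ s, f i)! / ∏ i ∈ s, ((f i)! : K) := by
  rw [eq_div_iff (prod_ne_zero_iff.2 fun i _ => Nat.cast_ne_zero.2 (Nat.factorial_ne_zero _)),
    mul_comm]
  exact_mod_cast Nat.multinomial_spec s f

theorem Nat.filter_Icc_product_Icc_eq_divisorsAntidiagonal {N : ℕ} (hN : N ≠ 0) :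
    (Icc 1 N ×ˢ Icc 1 N).filter (fun x => N = x.1 * x.2) = N.divisorsAntidiagonal := by
  ext ⟨a, b⟩
  simp only [mem_filter, mem_product, mem_Icc, Nat.mem_divisorsAntidiagonal]
  constructor
  · rintro ⟨-, h⟩
    exact ⟨h.symm, hN⟩
  · rintro ⟨rfl, h⟩
    have ha : 0 < a := Nat.pos_of_ne_zero (left_ne_zero_of_mul h)
    have hb : 0 < b := Nat.pos_of_ne_zero (right_ne_zero_of_mul h)
    exact ⟨⟨⟨ha, Nat.le_mul_of_pos_right a hb⟩, hb, Nat.le_mul_of_pos_left b ha⟩, rfl⟩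

theorem Nat.sum_Icc_sum_Icc_ite_eq_sum_divisors {M : Type*} [AddCommMonoid M] {N : ℕ}
    (hN : N ≠ 0) (p : ℕ → Prop) [DecidablePred p] (f : ℕ → ℕ → M) :
    ∑ n ∈ Icc 1 N, ∑ m ∈ Icc 1 N, (if p n ∧ N = n * m then f n m else 0) =
      ∑ n ∈ N.divisors.filter p, f n (N / n) := by
  rw [sum_filter, ← Nat.sum_divisorsAntidiagonal (fun n m => if p n then f n m else 0),
    ← Nat.filter_Icc_product_Icc_eq_divisorsAntidiagonal hN, sum_filter, ← sum_product']
  simp only [← ite_and, and_comm]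

theorem prod_ite_mul_pow {ι M : Type*} [CommMonoid M] (s : Finset ι) (p : ι → Prop)
    [DecidablePred p] (x : M) (a : ι → M) (β : ι → ℕ) :
    ∏ i ∈ s, ((if p i then x else 1) * a i) ^ β i =
      x ^ (∑ i ∈ s.filter p, β i) * ∏ i ∈ s, a i ^ β i := by
  simp_rw [mul_pow, prod_mul_distrib, ite_pow, one_pow, ← prod_filter, prod_pow_eq_pow_sum]

theorem neg_one_pow_succ_pow_div {R : Type*} [Monoid R] [HasDistribNeg R] {n M : ℕ}
    (h : n ∣ M) : ((-1 : R) ^ (n + 1)) ^ (M / n) = (-1) ^ M * (-1) ^ (M / n) := by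
  rw [← pow_mul, add_mul, one_mul, pow_add, Nat.mul_div_cancel' h]

open MvPowerSeries in
theorem baseSeries_eq_sum_C_mul_X_pow (r k n : ℕ) (s : Fin r → ℕ) :
    baseSeries r k n s =
      ∑ i : Fin r, C ((if k ≤ (i : ℕ) then (-1) ^ (n + 1) else 1) * (s i : ℚ)) * X i ^ n := by
  refine sum_congr rfl fun i _ => ?_
  by_cases h : (i : ℕ) < k
  · rw [if_pos h, if_neg (not_le.2 h), smul_eq_C_mul, one_mul]
  · rw [if_neg h, if_pos (not_lt.1 h), neg_pow, smul_eq_C_mul, map_mul, map_pow, map_neg, map_one]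
    ring

theorem coeff_baseSeries_pow (r k : ℕ) (s : Fin r → ℕ) {n : ℕ} (hn : 0 < n) (m : ℕ)
    (α : Fin r →₀ ℕ) :
    MvPowerSeries.coeff α (baseSeries r k n s ^ m) =
      if (∀ i, n ∣ α i) ∧ ∑ i, α i = n * m then
        (-1) ^ (∑ i ∈ univ.filter fun i : Fin r => k ≤ (i : ℕ), α i) *
          (-1) ^ ((∑ i ∈ univ.filter fun i : Fin r => k ≤ (i : ℕ), α i) / n) *
          (((∑ i, α i) / n)! / ∏ i, ((α i / n)! : ℚ)) * ∏ i, (s i : ℚ) ^ (α i / n)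
      else 0 := by
  rw [baseSeries_eq_sum_C_mul_X_pow, MvPowerSeries.coeff_sum_C_mul_X_pow_pow _ hn]
  split_ifs with h
  · rw [Nat.cast_multinomial, prod_ite_mul_pow, ← Nat.sum_div fun i _ => h.1 i,
      ← Nat.sum_div fun i _ => h.1 i, neg_one_pow_succ_pow_div (dvd_sum fun i _ => h.1 i)]
    ring
  · rfl

theorem coeff_Hmv_general (r k : ℕ) (s : Fin r → ℕ) (α : Fin r →₀ ℕ) (hα : α ≠ 0) :
    MvPowerSeries.coeff (R := ℚ) α (Hmv r k s) =
      ((-1 : ℚ) ^ (∑ i ∈ Finset.univ.filter fun i : Fin r => k ≤ (i : ℕ), α i) /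
          (∑ i, α i : ℕ)) *
        ∑ n ∈ (∑ i, α i).divisors.filter fun n => ∀ i, n ∣ α i,
          (ArithmeticFunction.moebius n : ℚ) *
            ((Nat.factorial ((∑ i, α i) / n) : ℚ) *
                (-1 : ℚ) ^ ((∑ i ∈ Finset.univ.filter fun i : Fin r => k ≤ (i : ℕ), α i) / n) /
              ∏ i, (Nat.factorial (α i / n) : ℚ)) *
            ∏ i, (s i : ℚ) ^ (α i / n) := by
  set N := ∑ i, α i
  set M := ∑ i ∈ univ.filter fun i : Fin r => k ≤ (i : ℕ), α i
  have hN : N ≠ 0 := fun h => hα <| Finsupp.ext fun i => sum_eq_zero_iff.1 h i (mem_univ i)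
  calc MvPowerSeries.coeff α (Hmv r k s)
      = ∑ n ∈ Icc 1 N, ∑ m ∈ Icc 1 N, (ArithmeticFunction.moebius n : ℚ) / n * (m : ℚ)⁻¹ *
          MvPowerSeries.coeff α (baseSeries r k n s ^ m) := rfl
    _ = ∑ n ∈ Icc 1 N, ∑ m ∈ Icc 1 N, if (∀ i, n ∣ α i) ∧ N = n * m then
          (ArithmeticFunction.moebius n : ℚ) / n * (m : ℚ)⁻¹ * ((-1) ^ M * (-1) ^ (M / n) *
            ((N / n)! / ∏ i, ((α i / n)! : ℚ)) * ∏ i, (s i : ℚ) ^ (α i / n))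
          else 0 :=
        sum_congr rfl fun n hn => sum_congr rfl fun m _ => by
          rw [coeff_baseSeries_pow r k s (mem_Icc.1 hn).1, mul_ite, mul_zero]
    _ = _ := Nat.sum_Icc_sum_Icc_ite_eq_sum_divisors hN _ _
    _ = _ := by
      rw [mul_sum]
      refine sum_congr rfl fun n hn => ?_
      have hnN : n ∣ N := Nat.dvd_of_mem_divisors (mem_filter.1 hn).1
      have hn0 : (n : ℚ) ≠ 0 :=
        Nat.cast_ne_zero.2 (Nat.pos_of_mem_divisors (mem_filter.1 hn).1).ne'
      rw [Nat.cast_div hnN hn0]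
      field_simp

/-- The multigraded Witt formula for free color Lie superalgebras: for every nonzero
multi-index `α`, the coefficient of `t₁^{α₁}⋯t_r^{α_r}` in
`H = −∑_{n≥1} (μ(n)/n)·log(1 − ∑_{i≤k} s_i t_i^n + ∑_{j>k} s_j(−t_j)^n)` equals
`((−1)^{|α|₋}/|α|)·∑_{n ∣ α} μ(n)·((|α|/n)!·(−1)^{|α|₋/n}/((α₁/n)!⋯(α_r/n)!))·∏ s_i^{α_i/n}`,
where `|α| = ∑ αᵢ` and `|α|₋ = α_{k+1} + ⋯ + α_r`, and `n ∣ α` means `n` divides every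
component of `α`. -/
theorem coeff_Hmv (r k : ℕ) (hr : 1 ≤ r) (hk : k ≤ r) (s : Fin r → ℕ)
    (hs : ∀ i, 0 < s i) (α : Fin r →₀ ℕ) (hα : α ≠ 0) :
    MvPowerSeries.coeff (R := ℚ) α (Hmv r k s) =
      ((-1 : ℚ) ^ (∑ i ∈ Finset.univ.filter fun i : Fin r => k ≤ (i : ℕ), α i) /
          (∑ i, α i : ℕ)) *
        ∑ n ∈ (∑ i, α i).divisors.filter fun n => ∀ i, n ∣ α i,
          (ArithmeticFunction.moebius n : ℚ) *
            ((Nat.factorial ((∑ i, α i) / n) : ℚ) *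
                (-1 : ℚ) ^ ((∑ i ∈ Finset.univ.filter fun i : Fin r => k ≤ (i : ℕ), α i) / n) /
              ∏ i, (Nat.factorial (α i / n) : ℚ)) *
            ∏ i, (s i : ℚ) ^ (α i / n) :=
  coeff_Hmv_general r k s α hα
end

section
/- Fix a prime p and integers r ≥ 1, n ≥ 1. Then n divides ∑_{m ∣ n} μ_p(m)·r^{n/m} (sum over positive divisors m of n), and the quotient (1/n)·∑_{m ∣ n} μ_p(m)·r^{n/m} is a nonnegative integer. -/
/-- The function `μ_p : ℕ → ℤ`: `μ_p(n) = μ(n)` if `p ∤ n`, and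
`μ_p(n) = μ(m)·(p^s − p^{s−1})` if `n = m·p^s` with `p ∤ m` and `s ≥ 1`. -/
def mup (p n : ℕ) : ℤ :=
  if p ∣ n then
    (ArithmeticFunction.moebius (n / p ^ (n.factorization p))) *
      ((p : ℤ) ^ (n.factorization p) - (p : ℤ) ^ (n.factorization p - 1))
  else ArithmeticFunction.moebius n

/-!
Since `p ^ s - p ^ (s - 1) = φ (p ^ s)`, we have `μ_p = μ * ι_p` as arithmetic functions, where
`ι_p m = m` if `m` is a power of `p` and `0` otherwise. The sum in question is therefore
`(μ_p * R) n = (ι_p * W) n` with `R k = r ^ k` and `W = μ * R`. The arithmetic functions `f` with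
`k ∣ f k` and `0 ≤ f k` for all `k` are closed under Dirichlet convolution, and both `ι_p` and `W`
are of this kind: `k ∣ W k` is the Gauss congruence, proved one prime power `q ^ (j + 1) ∥ k` at a
time, where it reduces to `q ^ (j + 1) ∣ y ^ q ^ (j + 1) - y ^ q ^ j`; and `W k ≥ 0` because its
leading term `r ^ k` exceeds `∑_{d ∣ k, d < k} r ^ d` once `r ≥ 2`.
-/

open ArithmeticFunction Finset
open scoped ArithmeticFunction.Moebius ArithmeticFunction.zeta

theorem Nat.Coprime.sum_divisors_mul_eq_sum_sum {R : Type*} [AddCommMonoid R] {m n : ℕ}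
    (hmn : m.Coprime n) (f : ℕ → R) :
    ∑ d ∈ (m * n).divisors, f d = ∑ a ∈ m.divisors, ∑ b ∈ n.divisors, f (a * b) := by
  rw [Nat.divisors_mul, Finset.mul_def, sum_image hmn.mul_injOn_divisors, sum_product]

theorem totient_eq_sum_divisors_moebius_div_mul (n : ℕ) :
    (n.totient : ℤ) = ∑ d ∈ n.divisors, μ (n / d) * d := by
  rcases n.eq_zero_or_pos with rfl | hn
  · simp
  rw [← Nat.sum_divisorsAntidiagonal' (fun a b => μ a * (b : ℤ))]
  refine ((sum_eq_iff_sum_mul_moebius_eq (R := ℤ) (f := fun d => (d.totient : ℤ))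
    (g := fun d => (d : ℤ))).mp (fun n _ => ?_) n hn).symm
  exact_mod_cast Nat.sum_totient n

theorem sum_divisors_prime_pow_succ_moebius_mul {q : ℕ} (hq : q.Prime) (j : ℕ) (F : ℕ → ℤ) :
    ∑ a ∈ (q ^ (j + 1)).divisors, μ a * F (q ^ (j + 1) / a) = F (q ^ (j + 1)) - F (q ^ j) := by
  rw [Nat.sum_divisors_prime_pow hq, sum_range_succ', sum_range_succ',
    sum_eq_zero fun i _ => by rw [moebius_apply_prime_pow hq (by omega), if_neg (by omega), zero_mul],
    Nat.pow_div (by omega) hq.pos, pow_one, moebius_apply_prime hq, pow_zero, moebius_apply_one,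
    Nat.div_one, Nat.add_sub_cancel]
  ring

theorem prime_pow_succ_dvd_pow_sub_pow (y : ℤ) {q : ℕ} (hq : q.Prime) (j : ℕ) :
    (q : ℤ) ^ (j + 1) ∣ y ^ q ^ (j + 1) - y ^ q ^ j := by
  simpa only [← pow_mul, ← pow_succ'] using
    dvd_sub_pow_of_dvd_sub (Int.prime_dvd_pow_self_sub hq y) j

theorem mup_eq_moebius_ordCompl_mul_totient {p : ℕ} (hp : p.Prime) (m : ℕ) :
    mup p m = μ (ordCompl[p] m) * (ordProj[p] m).totient := by
  unfold mup
  split_ifs with hpm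
  · rcases eq_or_ne m 0 with rfl | hm
    · simp
    obtain ⟨k, hk⟩ : ∃ k, m.factorization p = k + 1 :=
      ⟨_, (Nat.succ_pred_eq_of_pos (hp.factorization_pos_of_dvd hm hpm)).symm⟩
    rw [hk, Nat.totient_prime_pow_succ hp, Nat.add_sub_cancel]
    push_cast [Nat.cast_sub hp.one_le]
    ring
  · simp [Nat.factorization_eq_zero_of_not_dvd hpm]

namespace ArithmeticFunction

theorem natCast_dvd_mul_apply {R : Type*} [CommSemiring R] {f g : ArithmeticFunction R}
    (hf : ∀ n : ℕ, (n : R) ∣ f n) (hg : ∀ n : ℕ, (n : R) ∣ g n) (n : ℕ) :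
    (n : R) ∣ (f * g) n := by
  rw [mul_apply]
  refine dvd_sum fun x hx => ?_
  rw [← (Nat.mem_divisorsAntidiagonal.mp hx).1, Nat.cast_mul]
  exact mul_dvd_mul (hf _) (hg _)

theorem mul_apply_nonneg {R : Type*} [Semiring R] [PartialOrder R] [IsOrderedRing R]
    {f g : ArithmeticFunction R} (hf : ∀ n : ℕ, 0 ≤ f n) (hg : ∀ n : ℕ, 0 ≤ g n) (n : ℕ) :
    0 ≤ (f * g) n := by
  rw [mul_apply]
  exact sum_nonneg fun x _ => mul_nonneg (hf _) (hg _)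

def powSeq (x : ℤ) : ArithmeticFunction ℤ :=
  ⟨fun k => if k = 0 then 0 else x ^ k, if_pos rfl⟩

theorem powSeq_apply (x : ℤ) {k : ℕ} (hk : k ≠ 0) : powSeq x k = x ^ k := if_neg hk

theorem powSeq_zero : powSeq 0 = 0 := by
  ext k
  by_cases hk : k = 0 <;> simp [powSeq, hk]

theorem powSeq_one : powSeq 1 = ζ := by
  ext k
  simp [powSeq, natCoe_apply, zeta_apply]

theorem mul_powSeq_apply (f : ArithmeticFunction ℤ) (x : ℤ) (n : ℕ) :
    (f * powSeq x) n = ∑ d ∈ n.divisors, f d * x ^ (n / d) := by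
  rw [mul_apply, Nat.sum_divisorsAntidiagonal (fun a b => f a * powSeq x b)]
  refine sum_congr rfl fun d hd => ?_
  rw [powSeq_apply x (Nat.div_pos (Nat.divisor_le hd) (Nat.pos_of_mem_divisors hd)).ne']

theorem prime_pow_dvd_moebius_mul_powSeq_apply (x : ℤ) {q M : ℕ} (hq : q.Prime) (hqM : ¬ q ∣ M)
    (j : ℕ) : (q : ℤ) ^ (j + 1) ∣ (μ * powSeq x) (q ^ (j + 1) * M) := by
  have hcop : (q ^ (j + 1)).Coprime M := (hq.coprime_iff_not_dvd.2 hqM).pow_left _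
  rw [mul_powSeq_apply, hcop.sum_divisors_mul_eq_sum_sum, sum_comm]
  refine dvd_sum fun b hb => ?_
  have hsplit : ∀ a ∈ (q ^ (j + 1)).divisors, μ (a * b) * x ^ (q ^ (j + 1) * M / (a * b)) =
      μ b * (μ a * (x ^ (M / b)) ^ (q ^ (j + 1) / a)) := by
    intro a ha
    have ha' := Nat.dvd_of_mem_divisors ha
    have hb' := Nat.dvd_of_mem_divisors hb
    rw [isMultiplicative_moebius.map_mul_of_coprime
        ((hcop.coprime_dvd_left ha').coprime_dvd_right hb'),
      ← Nat.div_mul_div_comm ha' hb', mul_comm (q ^ (j + 1) / a), pow_mul]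
    ring
  rw [sum_congr rfl hsplit, ← mul_sum,
    sum_divisors_prime_pow_succ_moebius_mul hq j (fun e => (x ^ (M / b)) ^ e)]
  exact dvd_mul_of_dvd_right (prime_pow_succ_dvd_pow_sub_pow _ hq j) _

theorem ordProj_dvd_moebius_mul_powSeq_apply (x : ℤ) {q : ℕ} (hq : q.Prime) (n : ℕ) :
    ((ordProj[q] n : ℕ) : ℤ) ∣ (μ * powSeq x) n := by
  rcases hj : n.factorization q with _ | j
  · simp
  have hn : n ≠ 0 := by
    rintro rfl
    simp at hj
  have hqM := Nat.not_dvd_ordCompl hq hn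
  conv_rhs => rw [← Nat.ordProj_mul_ordCompl_eq_self n q]
  rw [hj] at hqM ⊢
  exact_mod_cast prime_pow_dvd_moebius_mul_powSeq_apply x hq hqM j

theorem natCast_dvd_moebius_mul_powSeq_apply (x : ℤ) (n : ℕ) : (n : ℤ) ∣ (μ * powSeq x) n := by
  rcases eq_or_ne n 0 with rfl | hn
  · simp
  refine Int.natCast_dvd.2 ((Nat.dvd_iff_prime_pow_dvd_dvd _ _).2 fun q k hq hqk => ?_)
  have hk : q ^ k ∣ ordProj[q] n := pow_dvd_pow q ((hq.pow_dvd_iff_le_factorization hn).1 hqk)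
  exact Int.natCast_dvd.1 ((Int.natCast_dvd_natCast.2 hk).trans
    (ordProj_dvd_moebius_mul_powSeq_apply x hq n))

theorem moebius_mul_powSeq_apply_nonneg (r n : ℕ) : 0 ≤ (μ * powSeq (r : ℤ)) n := by
  obtain rfl | rfl | hr : r = 0 ∨ r = 1 ∨ 2 ≤ r := by omega
  · simp [powSeq_zero]
  · rw [Nat.cast_one, powSeq_one, moebius_mul_coe_zeta, one_apply]
    split_ifs <;> norm_num
  rcases eq_or_ne n 0 with rfl | hn
  · simp
  rw [mul_apply, Nat.sum_divisorsAntidiagonal' (fun a b => μ a * powSeq (r : ℤ) b),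
    ← Nat.cons_self_properDivisors hn, sum_cons, Nat.div_self (Nat.pos_of_ne_zero hn),
    moebius_apply_one, one_mul, powSeq_apply _ hn]
  have hgeom : ∑ d ∈ n.properDivisors, (r : ℤ) ^ d < (r : ℤ) ^ n := by
    exact_mod_cast Nat.geomSum_lt hr fun d hd => (Nat.mem_properDivisors.1 hd).2
  have hterm : ∀ d ∈ n.properDivisors, -(r : ℤ) ^ d ≤ μ (n / d) * powSeq (r : ℤ) d := by
    intro d hd
    rw [powSeq_apply _ (Nat.pos_of_mem_properDivisors hd).ne']
    have hμ := (abs_le.1 (abs_moebius_le_one (n := n / d))).1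
    nlinarith [pow_nonneg (Nat.cast_nonneg (α := ℤ) r) d]
  have hsum := sum_le_sum hterm
  rw [sum_neg_distrib] at hsum
  linarith

/-- For prime `p`, the condition `ordProj[p] m = m` says that `m` is a power of `p`. -/
def idOnPowers (p : ℕ) : ArithmeticFunction ℤ :=
  ⟨fun m => if ordProj[p] m = m then m else 0, by simp⟩

theorem idOnPowers_apply (p m : ℕ) :
    idOnPowers p m = if ordProj[p] m = m then (m : ℤ) else 0 := rfl

theorem idOnPowers_apply_pow {p : ℕ} (hp : p.Prime) (i : ℕ) : idOnPowers p (p ^ i) = p ^ i := by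
  simp [idOnPowers_apply, hp.factorization_pow]

theorem natCast_dvd_idOnPowers_apply (p n : ℕ) : (n : ℤ) ∣ idOnPowers p n := by
  rw [idOnPowers_apply]
  split_ifs <;> simp

theorem idOnPowers_apply_nonneg (p n : ℕ) : 0 ≤ idOnPowers p n := by
  rw [idOnPowers_apply]
  split_ifs <;> simp

theorem moebius_mul_idOnPowers_apply {p : ℕ} (hp : p.Prime) (m : ℕ) :
    (μ * idOnPowers p) m = mup p m := by
  rcases eq_or_ne m 0 with rfl | hm
  · simp [mup]
  rw [mup_eq_moebius_ordCompl_mul_totient hp, totient_eq_sum_divisors_moebius_div_mul, mul_sum,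
    mul_apply, Nat.sum_divisorsAntidiagonal' (fun a b => μ a * idOnPowers p b)]
  symm
  refine sum_subset_zero_on_sdiff (Nat.divisors_subset_of_dvd hm (Nat.ordProj_dvd m p))
    (fun d hd => ?_) (fun d hd => ?_)
  · obtain ⟨hdm, hd⟩ := mem_sdiff.1 hd
    rw [idOnPowers_apply, if_neg, mul_zero]
    intro hproj
    refine hd (Nat.mem_divisors.2 ⟨?_, (pow_pos hp.pos _).ne'⟩)
    exact hproj ▸ Nat.ordProj_dvd_ordProj_of_dvd hm (Nat.dvd_of_mem_divisors hdm) p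
  · have hd' := Nat.dvd_of_mem_divisors hd
    obtain ⟨i, -, rfl⟩ := (Nat.dvd_prime_pow hp).1 hd'
    have hcop : (ordProj[p] m / p ^ i).Coprime (ordCompl[p] m) :=
      ((Nat.coprime_ordCompl hp hm).pow_left _).coprime_dvd_left (Nat.div_dvd_of_dvd hd')
    conv_rhs => rw [← Nat.ordProj_mul_ordCompl_eq_self m p]
    rw [Nat.mul_div_right_comm hd', isMultiplicative_moebius.map_mul_of_coprime hcop,
      idOnPowers_apply_pow hp]
    push_cast
    ring

end ArithmeticFunction

theorem restricted_witt_dvd_nonneg_general (p : ℕ) (hp : p.Prime) (r n : ℕ) :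
    (n : ℤ) ∣ (∑ m ∈ n.divisors, mup p m * (r : ℤ) ^ (n / m)) ∧
      0 ≤ (∑ m ∈ n.divisors, mup p m * (r : ℤ) ^ (n / m)) / (n : ℤ) := by
  have hconv : ∑ m ∈ n.divisors, mup p m * (r : ℤ) ^ (n / m) =
      (idOnPowers p * (μ * powSeq r)) n := by
    simp only [← moebius_mul_idOnPowers_apply hp]
    rw [← mul_powSeq_apply, mul_comm μ, mul_assoc]
  rw [hconv]
  exact ⟨natCast_dvd_mul_apply (natCast_dvd_idOnPowers_apply p)
      (natCast_dvd_moebius_mul_powSeq_apply r) n,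
    Int.ediv_nonneg (mul_apply_nonneg (idOnPowers_apply_nonneg p)
      (moebius_mul_powSeq_apply_nonneg r) n) n.cast_nonneg⟩

/-- Fix a prime `p` and integers `r ≥ 1`, `n ≥ 1`. Then `n` divides
`∑_{m ∣ n} μ_p(m)·r^{n/m}`, and the quotient `(1/n)·∑_{m ∣ n} μ_p(m)·r^{n/m}` is a
nonnegative integer. -/
theorem restricted_witt_dvd_nonneg (p : ℕ) (hp : p.Prime) (r n : ℕ) (hr : 1 ≤ r)
    (hn : 1 ≤ n) :
    (n : ℤ) ∣ (∑ m ∈ n.divisors, mup p m * (r : ℤ) ^ (n / m)) ∧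
      0 ≤ (∑ m ∈ n.divisors, mup p m * (r : ℤ) ^ (n / m)) / (n : ℤ) :=
  restricted_witt_dvd_nonneg_general p hp r n
end

section
/- Let r ≥ 1, 0 ≤ k ≤ r, and n ≥ 1. Then n divides ∑_{m ∣ n} μ(m)·(k − (−1)^m(r − k))^{n/m} (sum over positive divisors m of n), and the quotient (1/n)·∑_{m ∣ n} μ(m)·(k − (−1)^m(r − k))^{n/m} is a nonnegative integer. -/
/-- The integer `k − (−1)^m (r − k)` (with `0 ≤ k ≤ r`). -/
def csgn (r k m : ℕ) : ℤ := (k : ℤ) - (-1) ^ m * ((r : ℤ) - (k : ℤ))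

/-!
Write `c = csgn r k`. In `ZMod p` both `x ^ p = x` and `(-1) ^ p = -1`, so `c e ^ p ≡ c (p * e)`
modulo every prime `p`. For such a `c` and `n = p ^ (v + 1) * (e * m)` with `p ∤ e * m`, the
divisors `e` and `p * e` of `n` together contribute `μ e * (c e ^ (p ^ (v + 1) * m) - c (p * e) ^
(p ^ v * m))`, which the congruence, raised to the power `p ^ v`, makes divisible by `p ^ (v + 1)`;
the other divisors of `n` are not squarefree. Hence `n` divides the sum. Since `c 1 = r` and
`|c m| ≤ r`, the sum is at least `r ^ n - ∑_{d < n} r ^ d ≥ 1 - n`, so the quotient is an integer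
greater than `-1`.
-/

open Finset ArithmeticFunction
open scoped ArithmeticFunction.Moebius

theorem sum_divisors_prime_pow_mul_moebius_smul {M : Type*} [AddCommGroup M] {p t : ℕ}
    (hp : p.Prime) (hpt : ¬p ∣ t) (v : ℕ) (f : ℕ → M) :
    ∑ d ∈ (p ^ (v + 1) * t).divisors, μ d • f d = ∑ e ∈ t.divisors, μ e • (f e - f (p * e)) := by
  have hcop : (p ^ (v + 1)).Coprime t := (hp.coprime_iff_not_dvd.mpr hpt).pow_left _
  rw [Nat.divisors_mul, Finset.mul_def, sum_image hcop.mul_injOn_divisors, sum_product_right]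
  refine sum_congr rfl fun e he => ?_
  have hpe : ¬p ∣ e := fun h => hpt (h.trans (Nat.dvd_of_mem_divisors he))
  have hmu (i : ℕ) : μ (p ^ i * e) = μ (p ^ i) * μ e :=
    isMultiplicative_moebius.map_mul_of_coprime ((hp.coprime_iff_not_dvd.mpr hpe).pow_left _)
  have hsq (i : ℕ) : μ (p ^ (i + 1 + 1)) = 0 := by simp [moebius_apply_prime_pow hp]
  rw [Nat.sum_divisors_prime_pow hp, sum_range_succ', sum_range_succ']
  simp only [hmu, hsq, zero_mul, zero_smul, sum_const_zero, zero_add]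
  simp only [pow_zero, pow_one, one_mul, moebius_apply_one, moebius_apply_prime hp]
  module

def wittSum (c : ℕ → ℤ) (n : ℕ) : ℤ := ∑ m ∈ n.divisors, μ m * c m ^ (n / m)

section Divisibility

variable {c : ℕ → ℤ} (hc : ∀ p : ℕ, p.Prime → ∀ e : ℕ, (p : ℤ) ∣ c e ^ p - c (p * e))
include hc

theorem prime_pow_dvd_wittSum {p t : ℕ} (hp : p.Prime) (hpt : ¬p ∣ t) (v : ℕ) :
    (p : ℤ) ^ (v + 1) ∣ wittSum c (p ^ (v + 1) * t) := by
  simp_rw [wittSum, ← smul_eq_mul (μ _), sum_divisors_prime_pow_mul_moebius_smul hp hpt,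
    smul_eq_mul]
  refine dvd_sum fun e he => (Dvd.dvd.mul_left ?_ _)
  obtain ⟨m, rfl⟩ := Nat.dvd_of_mem_divisors he
  have he0 : 0 < e := Nat.pos_of_mem_divisors he
  have hdiv : p ^ (v + 1) * (e * m) / e = p * m * p ^ v := by
    rw [show p ^ (v + 1) * (e * m) = e * (p * m * p ^ v) by ring, Nat.mul_div_cancel_left _ he0]
  have hdiv' : p ^ (v + 1) * (e * m) / (p * e) = m * p ^ v := by
    rw [show p ^ (v + 1) * (e * m) = p * e * (m * p ^ v) by ring,
      Nat.mul_div_cancel_left _ (Nat.mul_pos hp.pos he0)]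
  have hfrob : (p : ℤ) ∣ c e ^ (p * m) - c (p * e) ^ m := by
    rw [pow_mul]
    exact (hc p hp e).trans (sub_dvd_pow_sub_pow _ _ m)
  simpa only [hdiv, hdiv', pow_mul] using dvd_sub_pow_of_dvd_sub hfrob v

theorem dvd_wittSum (n : ℕ) : (n : ℤ) ∣ wittSum c n := by
  rcases eq_or_ne n 0 with rfl | hn
  · simp [wittSum]
  rw [Int.natCast_dvd]
  refine (Nat.dvd_iff_prime_pow_dvd_dvd _ _).2 fun p k hp hpk => ?_
  obtain ⟨w, t, hpt, rfl⟩ := Nat.exists_eq_pow_mul_and_not_dvd hn p hp.ne_one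
  have hkw : k ≤ w := (Nat.pow_dvd_pow_iff_le_right hp.one_lt).1 <|
    ((hp.coprime_iff_not_dvd.2 hpt).pow_left k).dvd_of_dvd_mul_right hpk
  obtain _ | v := w
  · simp [Nat.le_zero.1 hkw]
  rw [← Int.natCast_dvd, Nat.cast_pow]
  exact (pow_dvd_pow _ hkw).trans (prime_pow_dvd_wittSum hc hp hpt v)

end Divisibility

theorem geom_sum_le_pow_add {r : ℤ} (hr : 1 ≤ r) (n : ℕ) :
    ∑ i ∈ range n, r ^ i ≤ r ^ n + n - 1 := by
  induction n with
  | zero => simp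
  | succ n ih =>
    rw [sum_range_succ, pow_succ]
    rcases hr.eq_or_lt with rfl | hr
    · simp
    · push_cast
      nlinarith [one_le_pow₀ hr.le (n := n)]

theorem pow_sub_geom_sum_le_wittSum {c : ℕ → ℤ} {r : ℤ} (hc1 : c 1 = r) (hcr : ∀ m, |c m| ≤ r)
    {n : ℕ} (hn : n ≠ 0) : r ^ n - ∑ i ∈ range n, r ^ i ≤ wittSum c n := by
  have hterm (d : ℕ) (hd : d ∈ n.properDivisors) :
      -r ^ d ≤ μ (n / d) * c (n / d) ^ (n / (n / d)) := by
    rw [Nat.div_div_self (Nat.mem_properDivisors.1 hd).1 hn]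
    refine neg_le_of_abs_le ?_
    rw [abs_mul, abs_pow]
    exact (mul_le_of_le_one_left (by positivity) abs_moebius_le_one).trans
      (pow_le_pow_left₀ (abs_nonneg _) (hcr _) d)
  have hsub : n.properDivisors ⊆ range n := fun d hd => mem_range.2 (Nat.mem_properDivisors.1 hd).2
  have hr : 0 ≤ r := (abs_nonneg _).trans (hcr 0)
  calc r ^ n - ∑ i ∈ range n, r ^ i
      ≤ ∑ d ∈ n.properDivisors, -r ^ d + r ^ n := by
        rw [sum_neg_distrib, neg_add_eq_sub]
        exact sub_le_sub_left (sum_le_sum_of_subset_of_nonneg hsub fun _ _ _ => by positivity) _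
    _ ≤ ∑ d ∈ n.properDivisors, μ (n / d) * c (n / d) ^ (n / (n / d)) + r ^ n :=
        add_le_add_left (sum_le_sum hterm) _
    _ = wittSum c n := by
        rw [wittSum, ← Nat.sum_div_divisors n (fun m => μ m * c m ^ (n / m)),
          ← Nat.cons_self_properDivisors hn, sum_cons, Nat.div_self (Nat.pos_of_ne_zero hn),
          Nat.div_one, hc1, moebius_apply_one, one_mul, add_comm]

theorem one_sub_le_wittSum {c : ℕ → ℤ} {r : ℤ} (hr : 1 ≤ r) (hc1 : c 1 = r)
    (hcr : ∀ m, |c m| ≤ r) {n : ℕ} (hn : n ≠ 0) : 1 - n ≤ wittSum c n := by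
  linarith [pow_sub_geom_sum_le_wittSum hc1 hcr hn, geom_sum_le_pow_add hr n]

theorem csgn_one (r k : ℕ) : csgn r k 1 = r := by
  simp [csgn]

theorem abs_csgn_le (r k m : ℕ) (hk : k ≤ r) : |csgn r k m| ≤ r := by
  rcases neg_one_pow_eq_or ℤ m with h | h <;> rw [csgn, h, abs_le] <;> omega

theorem prime_dvd_csgn_pow_sub (r k : ℕ) {p : ℕ} (hp : p.Prime) (e : ℕ) :
    (p : ℤ) ∣ csgn r k e ^ p - csgn r k (p * e) := by
  have := Fact.mk hp
  rw [← ZMod.intCast_zmod_eq_zero_iff_dvd]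
  simp [csgn, pow_mul, ZMod.pow_card]

/-- For `r ≥ 1`, `0 ≤ k ≤ r` and `n ≥ 1`, `n` divides
`∑_{m ∣ n} μ(m)·(k − (−1)^m(r − k))^{n/m}`, and the quotient
`(1/n)·∑_{m ∣ n} μ(m)·(k − (−1)^m(r − k))^{n/m}` is a nonnegative integer. -/
theorem super_witt_dvd_nonneg (r k n : ℕ) (hr : 1 ≤ r) (hk : k ≤ r) (hn : 1 ≤ n) :
    (n : ℤ) ∣ (∑ m ∈ n.divisors, (ArithmeticFunction.moebius m : ℤ) * csgn r k m ^ (n / m)) ∧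
      0 ≤ (∑ m ∈ n.divisors, (ArithmeticFunction.moebius m : ℤ) * csgn r k m ^ (n / m)) /
        (n : ℤ) := by
  change (n : ℤ) ∣ wittSum (csgn r k) n ∧ 0 ≤ wittSum (csgn r k) n / n
  have hdvd := dvd_wittSum (fun p hp e => prime_dvd_csgn_pow_sub r k hp e) n
  have hlower := one_sub_le_wittSum (by exact_mod_cast hr) (csgn_one r k)
    (abs_csgn_le r k · hk) (n := n) (by omega)
  refine ⟨hdvd, ?_⟩
  obtain ⟨q, hq⟩ := hdvd
  rw [hq] at hlower
  rw [hq, Int.mul_ediv_cancel_left _ (by positivity)]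
  nlinarith
end
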